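/- Let ε > 0 and let g : ℝ → [0,1] be any measurable function (interpreted as a randomized test, g(x) being the probability of outputting 1 on observation x). Then ∫ g dN(ε,1) − ∫ g dN(0,1) ≤ ε/√2. In words: the probability that a randomized police test arrests a sender of the message ε exceeds the probability that it arrests a sender of the message 0 by at most ε/√2. -/

import Mathlib

/-!
On `s = [ε/2, ∞)` the density of `N(ε,1)` dominates that of `N(0,1)`, and off `s` the reverse
holds, so among tests with values in `[0,1]` the indicator of `s` maximizes the difference of
acceptance probabilities. By translation this maximal difference is the `N(0,1)`-mass of
`[-ε/2, ε/2)`, which is at most `ε` times the peak density `1/√(2π) ≤ 1/√2`.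
-/

open MeasureTheory ProbabilityTheory Real
open scoped NNReal

section TestBound

variable {α : Type*} [MeasurableSpace α] {P Q : Measure α} [IsFiniteMeasure P]
  [IsFiniteMeasure Q] {s : Set α} {g : α → ℝ}

lemma setIntegral_one_sub (μ : Measure α) [IsFiniteMeasure μ] (hg : Integrable g μ) :
    ∫ x in s, (1 - g x) ∂μ = μ.real s - ∫ x in s, g x ∂μ := by
  rw [integral_sub (integrable_const 1) hg.restrict, setIntegral_const, smul_eq_mul, mul_one]

theorem integral_sub_integral_le_measureReal_sub (hs : MeasurableSet s)
    (hQP : Q.restrict s ≤ P.restrict s) (hPQ : P.restrict sᶜ ≤ Q.restrict sᶜ)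
    (hg : Measurable g) (hg0 : ∀ x, 0 ≤ g x) (hg1 : ∀ x, g x ≤ 1) :
    ∫ x, g x ∂P - ∫ x, g x ∂Q ≤ P.real s - Q.real s := by
  have hint : ∀ (μ : Measure α) [IsFiniteMeasure μ], Integrable g μ := fun μ _ =>
    .of_bound hg.aestronglyMeasurable 1 <| .of_forall fun x => by
      rw [norm_of_nonneg (hg0 x)]; exact hg1 x
  have hcompl : ∫ x in sᶜ, g x ∂P ≤ ∫ x in sᶜ, g x ∂Q :=
    integral_mono_measure hPQ (.of_forall hg0) (hint Q).restrict
  have hset : ∫ x in s, (1 - g x) ∂Q ≤ ∫ x in s, (1 - g x) ∂P :=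
    integral_mono_measure hQP (.of_forall fun x => sub_nonneg.2 (hg1 x))
      ((integrable_const 1).sub (hint P)).restrict
  rw [setIntegral_one_sub Q (hint Q), setIntegral_one_sub P (hint P)] at hset
  rw [← integral_add_compl hs (hint P), ← integral_add_compl hs (hint Q)]
  linarith

end TestBound

namespace ProbabilityTheory

lemma gaussianPDFReal_le_of_abs_sub_le {μ ν : ℝ} (v : ℝ≥0) {x : ℝ} (h : |x - ν| ≤ |x - μ|) :
    gaussianPDFReal μ v x ≤ gaussianPDFReal ν v x := by
  refine mul_le_mul_of_nonneg_left (exp_le_exp.2 ?_) (by positivity)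
  exact div_le_div_of_nonneg_right (neg_le_neg (sq_le_sq.2 h)) (by positivity)

lemma gaussianPDFReal_le (μ : ℝ) (v : ℝ≥0) (x : ℝ) :
    gaussianPDFReal μ v x ≤ (√(2 * π * v))⁻¹ := by
  refine (gaussianPDFReal_le_of_abs_sub_le (ν := x) v (by simp)).trans_eq ?_
  simp [gaussianPDFReal]

lemma restrict_gaussianReal_le {μ ν : ℝ} {v : ℝ≥0} (hv : v ≠ 0) {s : Set ℝ}
    (hs : MeasurableSet s) (h : ∀ x ∈ s, |x - ν| ≤ |x - μ|) :
    (gaussianReal μ v).restrict s ≤ (gaussianReal ν v).restrict s := by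
  simp only [gaussianReal_of_var_ne_zero _ hv, restrict_withDensity hs]
  exact withDensity_mono <| (ae_restrict_iff' hs).2 <| .of_forall fun x hx =>
    ENNReal.ofReal_le_ofReal (gaussianPDFReal_le_of_abs_sub_le v (h x hx))

lemma gaussianReal_le_smul_volume (μ : ℝ) {v : ℝ≥0} (hv : v ≠ 0) :
    gaussianReal μ v ≤ ENNReal.ofReal (√(2 * π * v))⁻¹ • volume := by
  rw [gaussianReal_of_var_ne_zero _ hv, ← withDensity_const]
  exact withDensity_mono <| .of_forall fun x =>
    ENNReal.ofReal_le_ofReal (gaussianPDFReal_le μ v x)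

lemma measureReal_gaussianReal_Ico_le (μ : ℝ) {v : ℝ≥0} (hv : v ≠ 0) {a b : ℝ} (hab : a ≤ b) :
    (gaussianReal μ v).real (Set.Ico a b) ≤ (√(2 * π * v))⁻¹ * (b - a) := by
  have h := gaussianReal_le_smul_volume μ hv (Set.Ico a b)
  rw [Measure.smul_apply, Real.volume_Ico, smul_eq_mul,
    ← ENNReal.ofReal_mul (by positivity)] at h
  exact ENNReal.toReal_le_of_le_ofReal (by positivity) h

lemma measureReal_gaussianReal_Ici_add (μ y a : ℝ) (v : ℝ≥0) :
    (gaussianReal (μ + y) v).real (Set.Ici (a + y)) = (gaussianReal μ v).real (Set.Ici a) := by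
  rw [← gaussianReal_map_add_const, measureReal_def, measureReal_def,
    Measure.map_apply (measurable_add_const y) measurableSet_Ici, Set.preimage_add_const_Ici,
    add_sub_cancel_right]

end ProbabilityTheory

/-- Randomized tests cannot distinguish `N(ε,1)` from `N(0,1)` by more than `ε/√2`:
for any measurable `g : ℝ → [0,1]`, the difference between the probability that the
randomized test outputs 1 under `N(ε,1)` and under `N(0,1)` is at most `ε/√2`. -/
theorem randomized_test_diff_le (ε : ℝ) (hε : 0 < ε) (g : ℝ → ℝ) (hg : Measurable g)
    (hg0 : ∀ x, 0 ≤ g x) (hg1 : ∀ x, g x ≤ 1) :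
    (∫ x, g x ∂(gaussianReal ε 1)) - (∫ x, g x ∂(gaussianReal 0 1)) ≤ ε / Real.sqrt 2 := by
  have hshift : (gaussianReal ε 1).real (Set.Ici (ε / 2)) =
      (gaussianReal 0 1).real (Set.Ici (-(ε / 2))) := by
    convert measureReal_gaussianReal_Ici_add 0 ε (-(ε / 2)) 1 using 3 <;> ring
  calc (∫ x, g x ∂(gaussianReal ε 1)) - (∫ x, g x ∂(gaussianReal 0 1))
      ≤ (gaussianReal ε 1).real (Set.Ici (ε / 2)) - (gaussianReal 0 1).real (Set.Ici (ε / 2)) := by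
        refine integral_sub_integral_le_measureReal_sub measurableSet_Ici
          (restrict_gaussianReal_le one_ne_zero measurableSet_Ici fun x hx => ?_)
          (restrict_gaussianReal_le one_ne_zero measurableSet_Ici.compl fun x hx => ?_) hg hg0 hg1
        · rw [Set.mem_Ici] at hx
          rw [sub_zero]
          exact abs_le_abs (by linarith) (by linarith)
        · rw [Set.mem_compl_iff, Set.mem_Ici, not_le] at hx
          rw [sub_zero, abs_sub_comm]
          exact abs_le_abs (by linarith) (by linarith)
    _ = (gaussianReal 0 1).real (Set.Ico (-(ε / 2)) (ε / 2)) := by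
        rw [hshift, ← Set.Ici_sdiff_Ici,
          measureReal_sdiff (Set.Ici_subset_Ici.2 (by linarith)) measurableSet_Ici]
    _ ≤ (√(2 * π))⁻¹ * ε := by
        simpa using measureReal_gaussianReal_Ico_le 0 one_ne_zero (by linarith : -(ε / 2) ≤ ε / 2)
    _ ≤ ε / √2 := by
        rw [inv_mul_eq_div]
        gcongr
        nlinarith [pi_gt_three]
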